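/- arXiv:1505.05310 — 3 statements merged into one kernel-verified Lean document; each statement's English description precedes it below -/
import Mathlib

section
/- Error in ridge regression due to Stage-1 estimation (deterministic form of Lemma B.3): Let λ > 0, c, η > 0, and let x̄_t, x̂_t ∈ ℝ^{d_x} and ȳ_t, ŷ_t ∈ ℝ^{d_y} for t = 1,…,N satisfy ‖x̄_t‖ ≤ c, ‖ȳ_t‖ ≤ c, ‖x̂_t − x̄_t‖ ≤ η, ‖ŷ_t − ȳ_t‖ ≤ η. Define the ridge-regression matrices Ŵ_λ = ((1/N)∑_t ŷ_t x̂_tᵀ)·((1/N)∑_t x̂_t x̂_tᵀ + λI)^{−1} and W̄_λ = ((1/N)∑_t ȳ_t x̄_tᵀ)·((1/N)∑_t x̄_t x̄_tᵀ + λI)^{−1}. Then ‖Ŵ_λ − W̄_λ‖ ≤ ‖(1/N)∑_t ȳ_t ȳ_tᵀ‖^{1/2}·(2cη + η²)·λ^{−3/2} + (2cη + η²)/λ. -/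
/-!
Write the sample second moments as Gram products `Bᵀ A` of the data matrices scaled by `N^{-1/2}`,
and put `G = Aᵀ A + λ`. Then `Ŵ - W̄ = W̄ (Ḡ - Ĝ) Ĝ⁻¹ + (B̂ᵀÂ - B̄ᵀĀ) Ĝ⁻¹`. Each outer product moves
by at most `‖x̂ - x̄‖‖ŷ‖ + ‖x̄‖‖ŷ - ȳ‖ ≤ 2cη + η²`, and for `u = G⁻¹ v` the identity
`‖A u‖² + λ‖u‖² = ⟪u, v⟫ ≤ ‖u‖‖v‖` gives `‖G⁻¹‖ ≤ λ⁻¹` and `‖A G⁻¹‖ ≤ λ^{-1/2}`, hence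
`‖W̄‖ ≤ ‖B̄‖ λ^{-1/2} = ‖B̄ᵀB̄‖^{1/2} λ^{-1/2}`.
-/

open scoped Matrix.Norms.L2Operator RealInnerProductSpace
open Matrix

namespace Matrix

theorem mul_inv_sub_mul_inv {m n α : Type*} [Fintype n] [DecidableEq n] [CommRing α]
    (S S' : Matrix m n α) {G G' : Matrix n n α}
    (hG : IsUnit G.det) (hG' : IsUnit G'.det) :
    S' * G'⁻¹ - S * G⁻¹ = S * G⁻¹ * (G - G') * G'⁻¹ + (S' - S) * G'⁻¹ := by
  rw [Matrix.mul_sub, Matrix.sub_mul, Matrix.mul_assoc S, nonsing_inv_mul _ hG,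
    Matrix.mul_one, Matrix.mul_assoc (S * G⁻¹), mul_nonsing_inv _ hG', Matrix.mul_one,
    Matrix.sub_mul]
  abel

lemma transpose_of_mul_of {ι m n α : Type*} [Fintype ι] [CommSemiring α] (y : ι → m → α)
    (x : ι → n → α) :
    (of y)ᵀ * of x = ∑ t, vecMulVec (y t) (x t) := by
  ext i j
  simp only [mul_apply, transpose_apply, of_apply, Matrix.sum_apply, vecMulVec_apply]

variable {ι m n : Type*} [Fintype ι] [Fintype m] [Fintype n] [DecidableEq n]

lemma l2_opNorm_le_of_forall {A : Matrix m n ℝ} {K : ℝ} (hK : 0 ≤ K)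
    (h : ∀ x, ‖A.toEuclideanLin x‖ ≤ K * ‖x‖) : ‖A‖ ≤ K :=
  ContinuousLinearMap.opNorm_le_bound _ hK h

lemma l2_opNorm_vecMulVec (x : EuclideanSpace ℝ m) (y : EuclideanSpace ℝ n) :
    ‖vecMulVec x y‖ = ‖x‖ * ‖y‖ := by
  have h := InnerProductSpace.symm_toEuclideanLin_rankOne x y
  rw [star_trivial] at h
  rw [← h, l2_opNorm_def, LinearEquiv.trans_apply, LinearEquiv.apply_symm_apply]
  exact InnerProductSpace.norm_rankOne x y

lemma l2_opNorm_vecMulVec_sub_vecMulVec_le (a a' : EuclideanSpace ℝ m)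
    (b b' : EuclideanSpace ℝ n) :
    ‖vecMulVec a' b' - vecMulVec a b‖ ≤ ‖a' - a‖ * ‖b'‖ + ‖a‖ * ‖b' - b‖ := by
  have h : vecMulVec a' b' - vecMulVec a b = vecMulVec (a' - a) b' + vecMulVec a (b' - b) := by
    ext i j
    simp only [sub_apply, add_apply, vecMulVec_apply, WithLp.ofLp_sub, Pi.sub_apply]
    ring
  rw [h, ← l2_opNorm_vecMulVec, ← l2_opNorm_vecMulVec]
  exact norm_add_le _ _

lemma l2_opNorm_transpose_eq_sqrt [DecidableEq ι] [DecidableEq m] (B : Matrix ι m ℝ) :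
    ‖Bᵀ‖ = √‖Bᵀ * B‖ := by
  rw [← conjTranspose_eq_transpose_of_trivial, l2_opNorm_conjTranspose_mul_self,
    l2_opNorm_conjTranspose, Real.sqrt_mul_self (norm_nonneg B)]

lemma inner_gram_add_smul_apply (A : Matrix ι n ℝ) (lam : ℝ) (u : EuclideanSpace ℝ n) :
    ⟪u, (Aᵀ * A + lam • 1).toEuclideanLin u⟫ = ‖A.toEuclideanLin u‖ ^ 2 + lam * ‖u‖ ^ 2 := by
  classical
  rw [map_add, LinearMap.add_apply, inner_add_right, ← conjTranspose_eq_transpose_of_trivial,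
    toLpLin_mul (q := 2), LinearMap.comp_apply, toEuclideanLin_conjTranspose_eq_adjoint,
    LinearMap.adjoint_inner_right, map_smul, toLpLin_one]
  simp [inner_smul_right]

variable {lam : ℝ}

lemma isUnit_det_gram_add_smul (A : Matrix ι n ℝ) (hlam : 0 < lam) :
    IsUnit (Aᵀ * A + lam • 1).det := by
  rw [← conjTranspose_eq_transpose_of_trivial, ← isUnit_iff_isUnit_det]
  exact (PosDef.posSemidef_add (posSemidef_conjTranspose_mul_self A) (PosDef.one.smul hlam)).isUnit

lemma sq_norm_add_mul_sq_norm_inv_gram_le (A : Matrix ι n ℝ) (hlam : 0 < lam)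
    (v : EuclideanSpace ℝ n) :
    ‖A.toEuclideanLin ((Aᵀ * A + lam • 1)⁻¹.toEuclideanLin v)‖ ^ 2 +
        lam * ‖(Aᵀ * A + lam • 1)⁻¹.toEuclideanLin v‖ ^ 2 ≤
      ‖(Aᵀ * A + lam • 1)⁻¹.toEuclideanLin v‖ * ‖v‖ := by
  set G := Aᵀ * A + lam • 1
  set u := G⁻¹.toEuclideanLin v
  have hu : G.toEuclideanLin u = v := by
    rw [← LinearMap.comp_apply, ← toLpLin_mul, mul_nonsing_inv _ (isUnit_det_gram_add_smul A hlam),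
      toLpLin_one, LinearMap.id_apply]
  calc ‖A.toEuclideanLin u‖ ^ 2 + lam * ‖u‖ ^ 2 = ⟪u, v⟫ := by
        rw [← inner_gram_add_smul_apply, hu]
    _ ≤ ‖u‖ * ‖v‖ := real_inner_le_norm u v

lemma l2_opNorm_inv_gram_add_smul_le (A : Matrix ι n ℝ) (hlam : 0 < lam) :
    ‖(Aᵀ * A + lam • 1)⁻¹‖ ≤ lam⁻¹ := by
  refine l2_opNorm_le_of_forall (inv_nonneg.2 hlam.le) fun v => ?_
  have h := sq_norm_add_mul_sq_norm_inv_gram_le A hlam v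
  rw [inv_mul_eq_div, le_div_iff₀ hlam]
  nlinarith [sq_nonneg ‖A.toEuclideanLin ((Aᵀ * A + lam • 1)⁻¹.toEuclideanLin v)‖,
    norm_nonneg ((Aᵀ * A + lam • 1)⁻¹.toEuclideanLin v), norm_nonneg v]

lemma l2_opNorm_mul_inv_gram_add_smul_le [DecidableEq ι] (A : Matrix ι n ℝ) (hlam : 0 < lam) :
    ‖A * (Aᵀ * A + lam • 1)⁻¹‖ ≤ (√lam)⁻¹ := by
  refine l2_opNorm_le_of_forall (by positivity) fun v => ?_
  set u := (Aᵀ * A + lam • 1)⁻¹.toEuclideanLin v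
  have hAu := sq_norm_add_mul_sq_norm_inv_gram_le A hlam v
  have hu : ‖u‖ ≤ lam⁻¹ * ‖v‖ :=
    (l2_opNorm_mulVec _ v).trans (by gcongr; exact l2_opNorm_inv_gram_add_smul_le A hlam)
  rw [toLpLin_mul (q := 2), LinearMap.comp_apply,
    ← pow_le_pow_iff_left₀ (norm_nonneg _) (by positivity) two_ne_zero]
  calc ‖A.toEuclideanLin u‖ ^ 2 ≤ ‖u‖ * ‖v‖ := by nlinarith [sq_nonneg ‖u‖]
    _ ≤ lam⁻¹ * ‖v‖ * ‖v‖ := by gcongr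
    _ = ((√lam)⁻¹ * ‖v‖) ^ 2 := by
      rw [mul_pow, inv_pow, Real.sq_sqrt hlam.le]; ring

noncomputable def ridgeEstimator (B : Matrix ι m ℝ) (A : Matrix ι n ℝ) (lam : ℝ) : Matrix m n ℝ :=
  Bᵀ * A * (Aᵀ * A + lam • 1)⁻¹

lemma l2_opNorm_ridgeEstimator_le [DecidableEq ι] [DecidableEq m] (B : Matrix ι m ℝ)
    (A : Matrix ι n ℝ) (hlam : 0 < lam) : ‖ridgeEstimator B A lam‖ ≤ √‖Bᵀ * B‖ * (√lam)⁻¹ := by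
  rw [ridgeEstimator, Matrix.mul_assoc, ← l2_opNorm_transpose_eq_sqrt]
  exact (l2_opNorm_mul _ _).trans (by gcongr; exact l2_opNorm_mul_inv_gram_add_smul_le A hlam)

theorem l2_opNorm_ridgeEstimator_sub_le [DecidableEq ι] [DecidableEq m] (B B' : Matrix ι m ℝ)
    (A A' : Matrix ι n ℝ) (hlam : 0 < lam) :
    ‖ridgeEstimator B' A' lam - ridgeEstimator B A lam‖ ≤
      √‖Bᵀ * B‖ * ‖A'ᵀ * A' - Aᵀ * A‖ * lam ^ (-(3 : ℝ) / 2) + ‖B'ᵀ * A' - Bᵀ * A‖ / lam := by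
  have hpow : lam ^ (-(3 : ℝ) / 2) = (√lam)⁻¹ * lam⁻¹ := by
    rw [show -(3 : ℝ) / 2 = -(1 / 2 + 1) by norm_num, Real.rpow_neg hlam.le,
      Real.rpow_add hlam, Real.rpow_one, ← Real.sqrt_eq_rpow, mul_inv]
  have hinv := l2_opNorm_inv_gram_add_smul_le A' hlam
  have hdecomp := mul_inv_sub_mul_inv (Bᵀ * A) (B'ᵀ * A') (isUnit_det_gram_add_smul A hlam)
    (isUnit_det_gram_add_smul A' hlam)
  rw [add_sub_add_right_eq_sub] at hdecomp
  calc ‖ridgeEstimator B' A' lam - ridgeEstimator B A lam‖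
      ≤ ‖ridgeEstimator B A lam‖ * ‖A'ᵀ * A' - Aᵀ * A‖ * ‖(A'ᵀ * A' + lam • 1)⁻¹‖ +
          ‖B'ᵀ * A' - Bᵀ * A‖ * ‖(A'ᵀ * A' + lam • 1)⁻¹‖ := by
        rw [ridgeEstimator, ridgeEstimator, hdecomp, norm_sub_rev (A'ᵀ * A')]
        refine (norm_add_le _ _).trans (add_le_add ?_ (l2_opNorm_mul _ _))
        exact (l2_opNorm_mul _ _).trans (by gcongr; exact l2_opNorm_mul _ _)
    _ ≤ √‖Bᵀ * B‖ * (√lam)⁻¹ * ‖A'ᵀ * A' - Aᵀ * A‖ * lam⁻¹ + ‖B'ᵀ * A' - Bᵀ * A‖ * lam⁻¹ := by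
        gcongr
        exact l2_opNorm_ridgeEstimator_le B A hlam
    _ = _ := by rw [hpow, div_eq_mul_inv]; ring

end Matrix

section SampleMatrix

variable {ι m n : Type*} [Fintype ι]

noncomputable def sampleMatrix (x : ι → EuclideanSpace ℝ n) : Matrix ι n ℝ :=
  (√(Fintype.card ι : ℝ))⁻¹ • Matrix.of fun t => x t

lemma sampleMatrix_transpose_mul (y : ι → EuclideanSpace ℝ m) (x : ι → EuclideanSpace ℝ n) :
    (sampleMatrix y)ᵀ * sampleMatrix x = (Fintype.card ι : ℝ)⁻¹ • ∑ t, vecMulVec (y t) (x t) := by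
  rw [sampleMatrix, sampleMatrix, transpose_smul, Matrix.smul_mul, Matrix.mul_smul, smul_smul,
    ← mul_inv, Real.mul_self_sqrt (Nat.cast_nonneg _), transpose_of_mul_of]

lemma norm_inv_card_smul_sum_le {E : Type*} [SeminormedAddCommGroup E] [NormedSpace ℝ E]
    {f : ι → E} {δ : ℝ} (hδ : 0 ≤ δ) (hf : ∀ t, ‖f t‖ ≤ δ) :
    ‖(Fintype.card ι : ℝ)⁻¹ • ∑ t, f t‖ ≤ δ := by
  rcases isEmpty_or_nonempty ι with hι | hι
  · simpa using hδ
  rw [norm_smul, norm_inv, Real.norm_natCast, inv_mul_le_iff₀ (by positivity)]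
  simpa using norm_sum_le_of_le Finset.univ fun t _ => hf t

lemma l2_opNorm_sampleMatrix_transpose_mul_sub_le [Fintype m] [Fintype n] [DecidableEq n] {c η : ℝ}
    (hc : 0 ≤ c) (hη : 0 ≤ η)
    (a a' : ι → EuclideanSpace ℝ m) (b b' : ι → EuclideanSpace ℝ n)
    (ha : ∀ t, ‖a t‖ ≤ c) (hb : ∀ t, ‖b t‖ ≤ c)
    (ha' : ∀ t, ‖a' t - a t‖ ≤ η) (hb' : ∀ t, ‖b' t - b t‖ ≤ η) :
    ‖(sampleMatrix a')ᵀ * sampleMatrix b' - (sampleMatrix a)ᵀ * sampleMatrix b‖ ≤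
      2 * c * η + η ^ 2 := by
  rw [sampleMatrix_transpose_mul, sampleMatrix_transpose_mul, ← smul_sub,
    ← Finset.sum_sub_distrib]
  refine norm_inv_card_smul_sum_le (by positivity) fun t => ?_
  have hb't : ‖b' t‖ ≤ c + η := norm_le_norm_add_norm_sub' (b' t) (b t) |>.trans
    (by linarith [hb t, hb' t])
  calc _ ≤ ‖a' t - a t‖ * ‖b' t‖ + ‖a t‖ * ‖b' t - b t‖ :=
        l2_opNorm_vecMulVec_sub_vecMulVec_le _ _ _ _
    _ ≤ η * (c + η) + c * η :=
        add_le_add (mul_le_mul (ha' t) hb't (norm_nonneg _) hη)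
          (mul_le_mul (ha t) (hb' t) (norm_nonneg _) hc)
    _ = 2 * c * η + η ^ 2 := by ring

end SampleMatrix

/-- **Error in ridge regression due to Stage-1 estimation** (deterministic form of
Lemma B.3). If `‖x̄_t‖, ‖ȳ_t‖ ≤ c`, `‖x̂_t − x̄_t‖ ≤ η`, `‖ŷ_t − ȳ_t‖ ≤ η`, then the
ridge-regression matrices `Ŵ_λ` (from the estimates) and `W̄_λ` (from the true values)
satisfy `‖Ŵ_λ − W̄_λ‖ ≤ ‖(1/N)∑ ȳ_t ȳ_tᵀ‖^{1/2}·(2cη + η²)·λ^{−3/2} + (2cη + η²)/λ`. -/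
theorem ridge_error_stage1 {dx dy N : ℕ} (lam c η : ℝ)
    (hlam : 0 < lam) (hc : 0 < c) (hη : 0 < η)
    (xbar xhat : Fin N → EuclideanSpace ℝ (Fin dx))
    (ybar yhat : Fin N → EuclideanSpace ℝ (Fin dy))
    (hx : ∀ t, ‖xbar t‖ ≤ c) (hy : ∀ t, ‖ybar t‖ ≤ c)
    (hxe : ∀ t, ‖xhat t - xbar t‖ ≤ η) (hye : ∀ t, ‖yhat t - ybar t‖ ≤ η)
    (What Wbar : Matrix (Fin dy) (Fin dx) ℝ)
    (hWhat : What = ((N : ℝ)⁻¹ • ∑ t, Matrix.vecMulVec (yhat t) (xhat t)) *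
      ((N : ℝ)⁻¹ • (∑ t, Matrix.vecMulVec (xhat t) (xhat t)) + lam • 1)⁻¹)
    (hWbar : Wbar = ((N : ℝ)⁻¹ • ∑ t, Matrix.vecMulVec (ybar t) (xbar t)) *
      ((N : ℝ)⁻¹ • (∑ t, Matrix.vecMulVec (xbar t) (xbar t)) + lam • 1)⁻¹) :
    ‖What - Wbar‖ ≤
      Real.sqrt ‖(N : ℝ)⁻¹ • (∑ t, Matrix.vecMulVec (ybar t) (ybar t))‖ *
          (2 * c * η + η ^ 2) * lam ^ (-(3 : ℝ) / 2) +
        (2 * c * η + η ^ 2) / lam := by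
  have hN : (Fintype.card (Fin N) : ℝ) = N := by rw [Fintype.card_fin]
  have hWhat' : What = ridgeEstimator (sampleMatrix yhat) (sampleMatrix xhat) lam := by
    rw [hWhat, ridgeEstimator, sampleMatrix_transpose_mul, sampleMatrix_transpose_mul, hN]
  have hWbar' : Wbar = ridgeEstimator (sampleMatrix ybar) (sampleMatrix xbar) lam := by
    rw [hWbar, ridgeEstimator, sampleMatrix_transpose_mul, sampleMatrix_transpose_mul, hN]
  rw [hWhat', hWbar', ← hN, ← sampleMatrix_transpose_mul]
  refine (l2_opNorm_ridgeEstimator_sub_le _ _ _ _ hlam).trans ?_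
  gcongr
  · exact l2_opNorm_sampleMatrix_transpose_mul_sub_le hc.le hη.le _ _ _ _ hx hx hxe hxe
  · exact l2_opNorm_sampleMatrix_transpose_mul_sub_le hc.le hη.le _ _ _ _ hy hx hye hxe
end

section
/- Error in ridge regression due to covariance estimation (deterministic form of Lemma B.4): Let Σ_x ∈ ℝ^{d_x×d_x} and Σ_y ∈ ℝ^{d_y×d_y} be symmetric positive semidefinite, and suppose Σ_yx = Σ_y^{1/2} V Σ_x^{1/2} for some matrix V with ‖V‖ ≤ 1. Let Σ̂_x be symmetric positive semidefinite with ‖Σ̂_x − Σ_x‖ ≤ ζ_xx, let Σ̂_yx satisfy ‖Σ̂_yx − Σ_yx‖ ≤ ζ_xy, and let λ > 0. Then ‖Σ̂_yx (Σ̂_x + λI)^{−1} − Σ_yx (Σ_x + λI)^{−1}‖ ≤ √(λ_max(Σ_y))·ζ_xx·λ^{−3/2} + ζ_xy/λ. -/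
/-!
Write `A = Σ_x + λ` and `B = Σ̂_x + λ`. The resolvent identity `A⁻¹ - B⁻¹ = A⁻¹ (B - A) B⁻¹`
gives
`Σ̂_yx B⁻¹ - Σ_yx A⁻¹ = (Σ̂_yx - Σ_yx) B⁻¹ - Σ_y^{1/2} V (Σ_x^{1/2} A⁻¹) (Σ̂_x - Σ_x) B⁻¹`,
so it suffices that for positive semidefinite `M` we have `‖(M + λ)⁻¹‖ ≤ λ⁻¹`,
`‖M^{1/2} (M + λ)⁻¹‖ ≤ λ^{-1/2}` and `‖M^{1/2}‖ ≤ √λ_max(M)`. The first two follow by putting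
`y = (M + λ)⁻¹ x` in `‖M^{1/2} y‖² + λ‖y‖² = ⟪y, (M + λ) y⟫ ≤ ‖y‖ ‖x‖`.
-/

open scoped Matrix.Norms.L2Operator

/-- The square root of a positive semidefinite matrix (the former Mathlib definition
`Matrix.PosSemidef.sqrt`, removed since). -/
noncomputable def Matrix.PosSemidef.sqrt {n : Type*} [Fintype n] [DecidableEq n]
    {A : Matrix n n ℝ} (hA : A.PosSemidef) : Matrix n n ℝ :=
  hA.1.eigenvectorUnitary.1 * Matrix.diagonal ((↑) ∘ (√·) ∘ hA.1.eigenvalues) *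
    (star hA.1.eigenvectorUnitary : Matrix n n ℝ)

/-- The largest eigenvalue of a real symmetric matrix, expressed as the supremum of the
Rayleigh quotient `⟪x, A x⟫` over the unit sphere of Euclidean space. -/
noncomputable def lamMax {n : Type*} [Fintype n] [DecidableEq n]
    (A : Matrix n n ℝ) : ℝ :=
  ⨆ x : Metric.sphere (0 : EuclideanSpace ℝ n) 1,
    inner (𝕜 := ℝ) (x : EuclideanSpace ℝ n) (Matrix.toEuclideanLin A x)

open scoped RealInnerProductSpace

namespace Matrix

variable {n : Type*} [Fintype n] [DecidableEq n]

theorem l2_opNorm_mul_le_of_le {𝕜 l m p : Type*} [RCLike 𝕜] [Fintype l] [Fintype m]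
    [DecidableEq m] [Fintype p] [DecidableEq p] {A : Matrix l m 𝕜} {B : Matrix m p 𝕜} {a b : ℝ}
    (hA : ‖A‖ ≤ a) (hB : ‖B‖ ≤ b) : ‖A * B‖ ≤ a * b :=
  (l2_opNorm_mul A B).trans (mul_le_mul hA hB (norm_nonneg B) ((norm_nonneg A).trans hA))

theorem PosSemidef.sqrt_conjTranspose {A : Matrix n n ℝ} (hA : A.PosSemidef) :
    hA.sqrtᴴ = hA.sqrt := by
  simp only [sqrt, star_eq_conjTranspose, conjTranspose_eq_transpose_of_trivial,
    Matrix.mul_assoc, transpose_mul, transpose_transpose, diagonal_transpose]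

theorem PosSemidef.sqrt_mul_self {A : Matrix n n ℝ} (hA : A.PosSemidef) :
    hA.sqrt * hA.sqrt = A := by
  set U : Matrix n n ℝ := hA.1.eigenvectorUnitary.1
  set D : Matrix n n ℝ := diagonal ((↑) ∘ (√·) ∘ hA.1.eigenvalues)
  have hUU : star U * U = 1 := Unitary.star_mul_self_of_mem hA.1.eigenvectorUnitary.2
  have hDD : D * D = diagonal (RCLike.ofReal ∘ hA.1.eigenvalues) := by
    simp [D, diagonal_mul_diagonal, Real.mul_self_sqrt (hA.eigenvalues_nonneg _)]
  calc hA.sqrt * hA.sqrt = U * D * (star U * U) * D * star U := by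
        simp only [PosSemidef.sqrt, U, D, Matrix.mul_assoc]
    _ = A := by
        conv_rhs => rw [hA.1.spectral_theorem, Unitary.conjStarAlgAut_apply]
        rw [hUU, Matrix.mul_one, Matrix.mul_assoc U, hDD]

theorem PosSemidef.norm_sqrt_apply_sq {A : Matrix n n ℝ} (hA : A.PosSemidef)
    (x : EuclideanSpace ℝ n) :
    ‖toEuclideanCLM (𝕜 := ℝ) hA.sqrt x‖ ^ 2 = ⟪x, toEuclideanCLM (𝕜 := ℝ) A x⟫ := by
  rw [ContinuousLinearMap.apply_norm_sq_eq_inner_adjoint_right,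
    ← ContinuousLinearMap.star_eq_adjoint, ← map_star, star_eq_conjTranspose,
    hA.sqrt_conjTranspose, ← ContinuousLinearMap.mul_def, ← map_mul, hA.sqrt_mul_self]
  rfl

theorem PosSemidef.inner_apply_nonneg {A : Matrix n n ℝ} (hA : A.PosSemidef)
    (x : EuclideanSpace ℝ n) : 0 ≤ ⟪x, toEuclideanCLM (𝕜 := ℝ) A x⟫ :=
  hA.norm_sqrt_apply_sq x ▸ sq_nonneg _

theorem inner_apply_le_lamMax_mul_norm_sq (A : Matrix n n ℝ) (x : EuclideanSpace ℝ n) :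
    ⟪x, toEuclideanCLM (𝕜 := ℝ) A x⟫ ≤ lamMax A * ‖x‖ ^ 2 := by
  rcases eq_or_ne x 0 with rfl | hx
  · simp
  set T := toEuclideanCLM (𝕜 := ℝ) A
  have hbdd : BddAbove (Set.range fun v : Metric.sphere (0 : EuclideanSpace ℝ n) 1 =>
      ⟪(v : EuclideanSpace ℝ n), toEuclideanLin A v⟫) := by
    refine ⟨‖T‖, ?_⟩
    rintro _ ⟨v, rfl⟩
    have hv : ‖(v : EuclideanSpace ℝ n)‖ = 1 := by simp
    calc ⟪(v : EuclideanSpace ℝ n), T v⟫ ≤ ‖(v : EuclideanSpace ℝ n)‖ * ‖T v‖ :=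
          real_inner_le_norm _ _
      _ ≤ ‖(v : EuclideanSpace ℝ n)‖ * (‖T‖ * ‖(v : EuclideanSpace ℝ n)‖) := by
          gcongr; exact T.le_opNorm _
      _ = ‖T‖ := by rw [hv]; ring
  set u := ‖x‖⁻¹ • x
  have hu : u ∈ Metric.sphere (0 : EuclideanSpace ℝ n) 1 := by
    simp [u, norm_smul, hx]
  have hu_le : ⟪u, T u⟫ ≤ lamMax A := le_ciSup hbdd ⟨u, hu⟩
  have hxu : ⟪x, T x⟫ = ‖x‖ ^ 2 * ⟪u, T u⟫ := by
    simp only [u, map_smul, real_inner_smul_left, real_inner_smul_right]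
    field_simp
  rw [hxu, mul_comm (lamMax A)]
  gcongr

theorem PosSemidef.norm_sqrt_le {A : Matrix n n ℝ} (hA : A.PosSemidef) :
    ‖hA.sqrt‖ ≤ √(lamMax A) := by
  refine ContinuousLinearMap.opNorm_le_bound _ (Real.sqrt_nonneg _) fun x => ?_
  rw [← Real.sqrt_sq (norm_nonneg x), ← Real.sqrt_mul' _ (sq_nonneg _)]
  exact Real.le_sqrt_of_sq_le
    ((hA.norm_sqrt_apply_sq x).trans_le (inner_apply_le_lamMax_mul_norm_sq A x))

theorem inner_add_smul_one_apply (A : Matrix n n ℝ) (lam : ℝ) (y : EuclideanSpace ℝ n) :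
    ⟪y, toEuclideanCLM (𝕜 := ℝ) (A + lam • 1) y⟫ =
      ⟪y, toEuclideanCLM (𝕜 := ℝ) A y⟫ + lam * ‖y‖ ^ 2 := by
  simp [inner_add_right, real_inner_smul_right]

theorem toEuclideanCLM_apply_inv_apply {𝕜 : Type*} [RCLike 𝕜] {B : Matrix n n 𝕜}
    (hB : IsUnit B) (x : EuclideanSpace 𝕜 n) :
    toEuclideanCLM (𝕜 := 𝕜) B (toEuclideanCLM (𝕜 := 𝕜) B⁻¹ x) = x := by
  rw [← mul_apply_eq_comp, ← map_mul, mul_nonsing_inv B ((isUnit_iff_isUnit_det B).mp hB),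
    map_one, one_apply_eq_self]

theorem PosSemidef.isUnit_add_smul_one {A : Matrix n n ℝ} (hA : A.PosSemidef) {lam : ℝ}
    (hlam : 0 < lam) : IsUnit (A + lam • 1) :=
  (PosDef.posSemidef_add hA (PosDef.one.smul hlam)).isUnit

theorem inner_apply_add_mul_norm_sq_le (A : Matrix n n ℝ) (lam : ℝ) (y : EuclideanSpace ℝ n) :
    ⟪y, toEuclideanCLM (𝕜 := ℝ) A y⟫ + lam * ‖y‖ ^ 2 ≤
      ‖y‖ * ‖toEuclideanCLM (𝕜 := ℝ) (A + lam • 1) y‖ :=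
  inner_add_smul_one_apply A lam y ▸ real_inner_le_norm _ _

theorem PosSemidef.mul_norm_le_norm_add_smul_one_apply {A : Matrix n n ℝ} (hA : A.PosSemidef)
    (lam : ℝ) (y : EuclideanSpace ℝ n) : lam * ‖y‖ ≤ ‖toEuclideanCLM (𝕜 := ℝ) (A + lam • 1) y‖ := by
  have key := inner_apply_add_mul_norm_sq_le A lam y
  have hAy := hA.inner_apply_nonneg y
  rcases (norm_nonneg y).eq_or_lt with hy | hy
  · rw [← hy, mul_zero]; exact norm_nonneg _
  · exact le_of_mul_le_mul_left (by nlinarith) hy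

theorem PosSemidef.mul_norm_sqrt_apply_sq_le {A : Matrix n n ℝ} (hA : A.PosSemidef) {lam : ℝ}
    (hlam : 0 ≤ lam) (y : EuclideanSpace ℝ n) :
    lam * ‖toEuclideanCLM (𝕜 := ℝ) hA.sqrt y‖ ^ 2 ≤
      ‖toEuclideanCLM (𝕜 := ℝ) (A + lam • 1) y‖ ^ 2 := by
  have key := inner_apply_add_mul_norm_sq_le A lam y
  have hy := hA.mul_norm_le_norm_add_smul_one_apply lam y
  set x := toEuclideanCLM (𝕜 := ℝ) (A + lam • 1) y
  calc lam * ‖toEuclideanCLM (𝕜 := ℝ) hA.sqrt y‖ ^ 2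
        = lam * ⟪y, toEuclideanCLM (𝕜 := ℝ) A y⟫ := by rw [hA.norm_sqrt_apply_sq]
    _ ≤ lam * (‖y‖ * ‖x‖) := by
        gcongr
        nlinarith [mul_nonneg hlam (sq_nonneg ‖y‖)]
    _ ≤ ‖x‖ ^ 2 := by nlinarith [norm_nonneg x]

theorem PosSemidef.norm_inv_add_smul_one_le {A : Matrix n n ℝ} (hA : A.PosSemidef) {lam : ℝ}
    (hlam : 0 < lam) : ‖(A + lam • 1)⁻¹‖ ≤ lam⁻¹ := by
  refine ContinuousLinearMap.opNorm_le_bound _ (by positivity) fun x => ?_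
  have h :=
    hA.mul_norm_le_norm_add_smul_one_apply lam (toEuclideanCLM (𝕜 := ℝ) (A + lam • 1)⁻¹ x)
  rw [toEuclideanCLM_apply_inv_apply (hA.isUnit_add_smul_one hlam)] at h
  rwa [le_inv_mul_iff₀ hlam]

theorem PosSemidef.norm_sqrt_mul_inv_add_smul_one_le {A : Matrix n n ℝ} (hA : A.PosSemidef)
    {lam : ℝ} (hlam : 0 < lam) : ‖hA.sqrt * (A + lam • 1)⁻¹‖ ≤ (√lam)⁻¹ := by
  rw [← l2_opNorm_toEuclideanCLM, map_mul]
  refine ContinuousLinearMap.opNorm_le_bound _ (by positivity) fun x => ?_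
  have h := hA.mul_norm_sqrt_apply_sq_le hlam.le (toEuclideanCLM (𝕜 := ℝ) (A + lam • 1)⁻¹ x)
  rw [toEuclideanCLM_apply_inv_apply (hA.isUnit_add_smul_one hlam)] at h
  rw [mul_apply_eq_comp, le_inv_mul_iff₀ (Real.sqrt_pos.2 hlam)]
  refine (pow_le_pow_iff_left₀ (by positivity) (norm_nonneg x) two_ne_zero).1 ?_
  rwa [mul_pow, Real.sq_sqrt hlam.le]

end Matrix

/-- **Error in ridge regression due to covariance estimation** (deterministic form of
Lemma B.4). If `Σ_yx = Σ_y^{1/2} V Σ_x^{1/2}` with `‖V‖ ≤ 1`, `‖Σ̂_x − Σ_x‖ ≤ ζ_xx` and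
`‖Σ̂_yx − Σ_yx‖ ≤ ζ_xy`, then
`‖Σ̂_yx(Σ̂_x + λI)⁻¹ − Σ_yx(Σ_x + λI)⁻¹‖ ≤ √(λ_max(Σ_y))·ζ_xx·λ^{−3/2} + ζ_xy/λ`. -/
theorem ridge_error_covariance {dx dy : ℕ}
    (Sx : Matrix (Fin dx) (Fin dx) ℝ) (Sy : Matrix (Fin dy) (Fin dy) ℝ)
    (hSx : Sx.PosSemidef) (hSy : Sy.PosSemidef)
    (V : Matrix (Fin dy) (Fin dx) ℝ) (hV : ‖V‖ ≤ 1)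
    (Syx : Matrix (Fin dy) (Fin dx) ℝ) (hSyx : Syx = hSy.sqrt * V * hSx.sqrt)
    (Sxhat : Matrix (Fin dx) (Fin dx) ℝ) (hSxhat : Sxhat.PosSemidef)
    (Syxhat : Matrix (Fin dy) (Fin dx) ℝ)
    (ζxx ζxy lam : ℝ) (hlam : 0 < lam)
    (hxx : ‖Sxhat - Sx‖ ≤ ζxx) (hxy : ‖Syxhat - Syx‖ ≤ ζxy) :
    ‖Syxhat * (Sxhat + lam • 1)⁻¹ - Syx * (Sx + lam • 1)⁻¹‖ ≤
      Real.sqrt (lamMax Sy) * ζxx * lam ^ (-(3 : ℝ) / 2) + ζxy / lam := by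
  set A := Sx + lam • 1
  set B := Sxhat + lam • 1
  have hunit : IsUnit A ↔ IsUnit B :=
    iff_of_true (hSx.isUnit_add_smul_one hlam) (hSxhat.isUnit_add_smul_one hlam)
  have hsplit : Syxhat * B⁻¹ - Syx * A⁻¹ =
      (Syxhat - Syx) * B⁻¹ - hSy.sqrt * V * (hSx.sqrt * A⁻¹) * (Sxhat - Sx) * B⁻¹ := by
    calc Syxhat * B⁻¹ - Syx * A⁻¹
        = (Syxhat - Syx) * B⁻¹ - Syx * (A⁻¹ - B⁻¹) := by
          rw [Matrix.sub_mul, Matrix.mul_sub]; abel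
      _ = _ := by
        rw [Matrix.inv_sub_inv hunit, add_sub_add_right_eq_sub, hSyx]
        simp only [Matrix.mul_assoc]
  have hpow : lam ^ (-(3 : ℝ) / 2) = (√lam)⁻¹ * lam⁻¹ := by
    rw [show -(3 : ℝ) / 2 = -(1 / 2) + -1 by norm_num, Real.rpow_add hlam, Real.rpow_neg hlam.le,
      Real.rpow_neg_one, ← Real.sqrt_eq_rpow]
  have hBinv := hSxhat.norm_inv_add_smul_one_le hlam
  have hcross := Matrix.l2_opNorm_mul_le_of_le (Matrix.l2_opNorm_mul_le_of_le
    (Matrix.l2_opNorm_mul_le_of_le (Matrix.l2_opNorm_mul_le_of_le hSy.norm_sqrt_le hV)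
      (hSx.norm_sqrt_mul_inv_add_smul_one_le hlam)) hxx) hBinv
  calc ‖Syxhat * B⁻¹ - Syx * A⁻¹‖
      ≤ ‖(Syxhat - Syx) * B⁻¹‖ + ‖hSy.sqrt * V * (hSx.sqrt * A⁻¹) * (Sxhat - Sx) * B⁻¹‖ := by
        rw [hsplit]; exact norm_sub_le _ _
    _ ≤ ζxy * lam⁻¹ + √(lamMax Sy) * 1 * (√lam)⁻¹ * ζxx * lam⁻¹ :=
        add_le_add (Matrix.l2_opNorm_mul_le_of_le hxy hBinv) hcross
    _ = √(lamMax Sy) * ζxx * lam ^ (-(3 : ℝ) / 2) + ζxy / lam := by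
        rw [hpow]; ring
end

section
/- Ridge regression operator norm bound: For any vectors q₁,…,q_N ∈ ℝ^{d_q}, p₁,…,p_N ∈ ℝ^{d_p}, and any λ > 0, ‖((1/N)∑_{t=1}^N p_t q_tᵀ)·((1/N)∑_{t=1}^N q_t q_tᵀ + λI)^{−1}‖ ≤ ‖(1/N)∑_{t=1}^N p_t p_tᵀ‖^{1/2} / √λ. -/
/-!
Write the empirical moments as Gram products: with `B` and `C` the matrices whose columns are
`p_t / √N` and `q_t / √N`, the cross moment is `B Cᴴ`, and the second moments are `B Bᴴ` and
`C Cᴴ`. Then `‖B Cᴴ M⁻¹‖ ≤ ‖B‖ ‖Cᴴ M⁻¹‖` for `M = C Cᴴ + λ I`, where `‖B‖ = ‖B Bᴴ‖^{1/2}` is the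
C⋆-identity. For `y = M⁻¹ x` one has `‖Cᴴ y‖² + λ ‖y‖² = re ⟪y, x⟫ ≤ ‖y‖ ‖x‖`, and maximising
over `‖y‖` gives `4 λ ‖Cᴴ y‖² ≤ ‖x‖²`, i.e. `‖Cᴴ M⁻¹‖ ≤ 1 / (2 √λ)`.
-/

open scoped Matrix.Norms.L2Operator

section Adjoint

variable {𝕜 E F : Type*} [RCLike 𝕜]
  [NormedAddCommGroup E] [InnerProductSpace 𝕜 E] [FiniteDimensional 𝕜 E]
  [NormedAddCommGroup F] [InnerProductSpace 𝕜 F] [FiniteDimensional 𝕜 F]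

theorem LinearMap.two_mul_sqrt_mul_norm_apply_le_norm_adjoint_apply_add_smul
    (T : E →ₗ[𝕜] F) {lam : ℝ} (hlam : 0 ≤ lam) (y : E) :
    2 * √lam * ‖T y‖ ≤ ‖T.adjoint (T y) + (lam : 𝕜) • y‖ := by
  set x := T.adjoint (T y) + (lam : 𝕜) • y
  have hx : ‖T y‖ ^ 2 + lam * ‖y‖ ^ 2 = RCLike.re (inner 𝕜 y x) := by
    simp [x, inner_add_right, inner_smul_right, LinearMap.adjoint_inner_right]
  have hyx : RCLike.re (inner 𝕜 y x) ≤ ‖y‖ * ‖x‖ := re_inner_le_norm y x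
  refine (pow_le_pow_iff_left₀ (by positivity) (norm_nonneg x) two_ne_zero).mp ?_
  rw [mul_pow, mul_pow, Real.sq_sqrt hlam]
  nlinarith [sq_nonneg (‖x‖ - 2 * lam * ‖y‖), norm_nonneg x, norm_nonneg y]

end Adjoint

namespace Matrix

open scoped ComplexOrder

theorem sum_vecMulVec_eq_transpose_mul {R ι m n : Type*} [NonUnitalNonAssocSemiring R]
    [Fintype ι] (a : ι → m → R) (b : ι → n → R) :
    ∑ i, vecMulVec (a i) (b i) = (of a)ᵀ * of b := by
  ext j l
  simp [sum_apply, vecMulVec_apply, mul_apply]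

theorem smul_sum_vecMulVec_eq_mul_conjTranspose {ι m n : Type*} [Fintype ι] {c : ℝ}
    (hc : 0 ≤ c) (a : ι → m → ℝ) (b : ι → n → ℝ) :
    c • ∑ i, vecMulVec (a i) (b i) = (√c • (of a)ᵀ) * (√c • (of b)ᵀ)ᴴ := by
  rw [sum_vecMulVec_eq_transpose_mul, conjTranspose_eq_transpose_of_trivial, transpose_smul,
    transpose_transpose, Matrix.smul_mul, Matrix.mul_smul, smul_smul, Real.mul_self_sqrt hc]

variable {𝕜 m n k : Type*} [RCLike 𝕜] [Fintype m] [Fintype n] [Fintype k] [DecidableEq n]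

theorem posDef_mul_conjTranspose_add_smul_one (C : Matrix n k 𝕜) {lam : ℝ} (hlam : 0 < lam) :
    (C * Cᴴ + lam • 1).PosDef :=
  PosDef.posSemidef_add (posSemidef_self_mul_conjTranspose C) (PosDef.one.smul hlam)

variable [DecidableEq k]

theorem l2_opNorm_conjTranspose_mul_inv_le (C : Matrix n k 𝕜) {lam : ℝ} (hlam : 0 < lam) :
    ‖Cᴴ * (C * Cᴴ + lam • 1)⁻¹‖ ≤ (2 * √lam)⁻¹ := by
  set M := C * Cᴴ + lam • 1
  have hM : M * M⁻¹ = 1 := mul_nonsing_inv M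
    ((posDef_mul_conjTranspose_add_smul_one C hlam).isUnit.map detMonoidHom)
  rw [l2_opNorm_def]
  refine ContinuousLinearMap.opNorm_le_bound _ (by positivity) fun x => ?_
  set T := toEuclideanLin Cᴴ
  set y := toEuclideanLin M⁻¹ x
  have hx : x = T.adjoint (T y) + (lam : 𝕜) • y := by
    rw [← toEuclideanLin_conjTranspose_eq_adjoint, conjTranspose_conjTranspose]
    calc x = toEuclideanLin (M * M⁻¹) x := by simp only [hM, toLpLin_one, LinearMap.id_coe, id_eq]
      _ = _ := by
        simp only [M, T, y, toLpLin_mul_same, add_mul, map_add, map_smul, toLpLin_one,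
          RCLike.real_smul_eq_coe_smul (K := 𝕜)]
        simp
  have key := T.two_mul_sqrt_mul_norm_apply_le_norm_adjoint_apply_add_smul hlam.le y
  rw [← hx] at key
  rw [inv_mul_eq_div, le_div_iff₀' (by positivity)]
  simpa [T, y] using key

variable [DecidableEq m]

theorem l2_opNorm_eq_sqrt_mul_conjTranspose (B : Matrix m k 𝕜) : ‖B‖ = √‖B * Bᴴ‖ := by
  rw [← l2_opNorm_conjTranspose B, ← Real.sqrt_mul_self (norm_nonneg Bᴴ),
    ← l2_opNorm_conjTranspose_mul_self, conjTranspose_conjTranspose]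

theorem l2_opNorm_mul_conjTranspose_mul_inv_le (B : Matrix m k 𝕜) (C : Matrix n k 𝕜) {lam : ℝ}
    (hlam : 0 < lam) : ‖B * Cᴴ * (C * Cᴴ + lam • 1)⁻¹‖ ≤ √‖B * Bᴴ‖ / (2 * √lam) :=
  calc ‖B * Cᴴ * (C * Cᴴ + lam • 1)⁻¹‖ ≤ ‖B‖ * ‖Cᴴ * (C * Cᴴ + lam • 1)⁻¹‖ := by
        rw [Matrix.mul_assoc]; exact l2_opNorm_mul _ _
    _ ≤ √‖B * Bᴴ‖ * (2 * √lam)⁻¹ := by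
        rw [l2_opNorm_eq_sqrt_mul_conjTranspose]
        gcongr
        exact l2_opNorm_conjTranspose_mul_inv_le C hlam
    _ = √‖B * Bᴴ‖ / (2 * √lam) := (div_eq_mul_inv _ _).symm

end Matrix

/-- **Ridge regression operator norm bound.** For any vectors `q₁,…,q_N`, `p₁,…,p_N` and
any `λ > 0`,
`‖((1/N)∑ p_t q_tᵀ)·((1/N)∑ q_t q_tᵀ + λI)⁻¹‖ ≤ ‖(1/N)∑ p_t p_tᵀ‖^{1/2}/√λ`. -/
theorem ridge_operator_norm_bound {dq dp N : ℕ}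
    (q : Fin N → EuclideanSpace ℝ (Fin dq)) (p : Fin N → EuclideanSpace ℝ (Fin dp))
    (lam : ℝ) (hlam : 0 < lam) :
    ‖((N : ℝ)⁻¹ • ∑ t, Matrix.vecMulVec (p t) (q t)) *
        ((N : ℝ)⁻¹ • (∑ t, Matrix.vecMulVec (q t) (q t)) + lam • 1)⁻¹‖ ≤
      Real.sqrt ‖(N : ℝ)⁻¹ • (∑ t, Matrix.vecMulVec (p t) (p t))‖ / Real.sqrt lam := by
  have hN : (0 : ℝ) ≤ (N : ℝ)⁻¹ := by positivity
  rw [Matrix.smul_sum_vecMulVec_eq_mul_conjTranspose hN,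
    Matrix.smul_sum_vecMulVec_eq_mul_conjTranspose hN,
    Matrix.smul_sum_vecMulVec_eq_mul_conjTranspose hN]
  calc _ ≤ _ / (2 * √lam) := Matrix.l2_opNorm_mul_conjTranspose_mul_inv_le _ _ hlam
    _ ≤ _ := by gcongr; linarith [Real.sqrt_nonneg lam]
end
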